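/- Let D be an edge set with u,v connected in G−D, and let e = (x,y) be an edge of G not in D such that both π(u,x) and π(u,y) contain no edge of D, and e is not a tree edge of T_u (i.e., π(u,y) is not π(u,x) followed by e, and π(u,x) is not π(u,y) followed by e). Then π_{G−D}(u,v) does not traverse e. -/

import Mathlib

/-
If `π_{G−D}(u,v)` crossed `e` from `x` to `y`, its prefixes up to `x` and up to `y` would be
shortest paths of `G − D`. The shortest paths `π(u,x)` and `π(u,y)` of `G` avoid `D`, so they are
also shortest in `G − D`, and by uniqueness they coincide with those prefixes. Hence
`π(u,y) = π(u,x) · e`, i.e. `e` is a tree edge of `T_u`.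
-/

open SimpleGraph

variable {V : Type*}

/-- Total weight of a walk with respect to edge weights `w`. -/
def walkWeight (w : Sym2 V → ℝ) {G : SimpleGraph V} {a b : V} (p : G.Walk a b) : ℝ :=
  (p.edges.map w).sum

/-- `p` is the/a minimum-weight path from `a` to `b` in `G`. -/
def IsShortestPath (w : Sym2 V → ℝ) (G : SimpleGraph V) {a b : V} (p : G.Walk a b) : Prop :=
  p.IsPath ∧ ∀ q : G.Walk a b, q.IsPath → walkWeight w p ≤ walkWeight w q

/-- `Decomposable w G k p` : `p` is the concatenation of at most `k+1` shortest paths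
of `G` interleaved with at most `k` single edges. -/
inductive Decomposable (w : Sym2 V → ℝ) (G : SimpleGraph V) :
    ℕ → ∀ {a b : V}, G.Walk a b → Prop
  | single {a b : V} (k : ℕ) (p : G.Walk a b) (hp : IsShortestPath w G p) :
      Decomposable w G k p
  | cons {a b c d : V} (k : ℕ) (p : G.Walk a b) (h : G.Adj b c) (q : G.Walk c d)
      (hp : IsShortestPath w G p) (hq : Decomposable w G k q) :
      Decomposable w G (k + 1) (p.append (Walk.cons h q))

/-- The rank of a walk `p` in `G`: the least `k` such that `p` is `k`-decomposable. -/
noncomputable def pathRank (w : Sym2 V → ℝ) (G : SimpleGraph V) {a b : V} (p : G.Walk a b) : ℕ :=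
  sInf {k | Decomposable w G k p}

namespace SimpleGraph.Walk

theorem exists_append_cons_of_mem_edges {G : SimpleGraph V} {x y : V} :
    ∀ {a b : V} (p : G.Walk a b), s(x, y) ∈ p.edges →
    (∃ (q : G.Walk a x) (h : G.Adj x y) (r : G.Walk y b), p = q.append (cons h r)) ∨
    (∃ (q : G.Walk a y) (h : G.Adj y x) (r : G.Walk x b), p = q.append (cons h r))
  | _, _, nil, he => by simp at he
  | _, _, cons h p, he => by
    rw [edges_cons, List.mem_cons, Sym2.eq_iff] at he
    rcases he with (⟨rfl, rfl⟩ | ⟨rfl, rfl⟩) | he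
    · exact .inl ⟨nil, h, p, rfl⟩
    · exact .inr ⟨nil, h, p, rfl⟩
    · rcases exists_append_cons_of_mem_edges p he with ⟨q, h', r, rfl⟩ | ⟨q, h', r, rfl⟩
      · exact .inl ⟨cons h q, h', r, rfl⟩
      · exact .inr ⟨cons h q, h', r, rfl⟩

end SimpleGraph.Walk

section Weight

variable {G H : SimpleGraph V} {w : Sym2 V → ℝ} {a b c : V}

theorem walkWeight_append (p : G.Walk a b) (q : G.Walk b c) :
    walkWeight w (p.append q) = walkWeight w p + walkWeight w q := by
  simp [walkWeight, Walk.edges_append]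

theorem walkWeight_transfer (p : G.Walk a b) (hp : ∀ e ∈ p.edges, e ∈ H.edgeSet) :
    walkWeight w (p.transfer H hp) = walkWeight w p := by
  simp [walkWeight]

theorem walkWeight_mapLe (hle : G ≤ H) (p : G.Walk a b) :
    walkWeight w (p.mapLe hle) = walkWeight w p := by
  simp only [walkWeight, Walk.edges_mapLe_eq_edges]

theorem walkWeight_bypass_le [DecidableEq V] (hw : ∀ e ∈ G.edgeSet, 0 ≤ w e)
    (p : G.Walk a b) : walkWeight w p.bypass ≤ walkWeight w p := by
  obtain ⟨l, hperm, hsub⟩ := p.bypass_isPath.edges_nodup.subperm p.edges_bypass_subset_edges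
  calc walkWeight w p.bypass = (l.map w).sum := ((hperm.map w).sum_eq).symm
    _ ≤ (p.edges.map w).sum := by
        refine (hsub.map w).sum_le_sum fun t ht => ?_
        obtain ⟨e, he, rfl⟩ := List.mem_map.mp ht
        exact hw e (p.edges_subset_edgeSet he)

end Weight

namespace IsShortestPath

variable {G H : SimpleGraph V} {w : Sym2 V → ℝ} {a b c : V}

theorem of_append_left (hw : ∀ e ∈ G.edgeSet, 0 ≤ w e) {q : G.Walk a b} {r : G.Walk b c}
    (h : IsShortestPath w G (q.append r)) : IsShortestPath w G q := by
  classical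
  refine ⟨h.1.of_append_left, fun q' _ => ?_⟩
  have := calc
    walkWeight w q + walkWeight w r = walkWeight w (q.append r) := (walkWeight_append q r).symm
    _ ≤ walkWeight w (q'.append r).bypass := h.2 _ (q'.append r).bypass_isPath
    _ ≤ walkWeight w (q'.append r) := walkWeight_bypass_le hw _
    _ = walkWeight w q' + walkWeight w r := walkWeight_append q' r
  linarith

theorem transfer (hle : H ≤ G) {p : G.Walk a b} (hp : IsShortestPath w G p)
    (hpH : ∀ e ∈ p.edges, e ∈ H.edgeSet) : IsShortestPath w H (p.transfer H hpH) := by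
  refine ⟨hp.1.transfer hpH, fun q hq => ?_⟩
  simpa only [walkWeight_transfer, walkWeight_mapLe] using hp.2 (q.mapLe hle) (hq.mapLe hle)

theorem eq_mapLe (hle : H ≤ G)
    (huniq : ∀ (p q : H.Walk a b), IsShortestPath w H p → IsShortestPath w H q → p = q)
    {p : G.Walk a b} (hp : IsShortestPath w G p) (hpH : ∀ e ∈ p.edges, e ∈ H.edgeSet)
    {s : H.Walk a b} (hs : IsShortestPath w H s) : p = s.mapLe hle := by
  rw [← huniq _ s (hp.transfer hle hpH) hs, Walk.mapLe,
    ← Walk.transfer_eq_map_ofLE _ (fun e he => edgeSet_mono hle (Walk.edges_subset_edgeSet _ he)),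
    Walk.transfer_transfer, Walk.transfer_self]

end IsShortestPath

theorem concat_eq_of_isShortestPath_append_cons {G H : SimpleGraph V} {w : Sym2 V → ℝ}
    (hle : H ≤ G) (hw : ∀ e ∈ H.edgeSet, 0 ≤ w e)
    (huniq : ∀ (a b : V) (p q : H.Walk a b),
      IsShortestPath w H p → IsShortestPath w H q → p = q)
    {u x y v : V} {q : H.Walk u x} {h : H.Adj x y} {r : H.Walk y v}
    (hP : IsShortestPath w H (q.append (Walk.cons h r)))
    {px : G.Walk u x} (hpx : IsShortestPath w G px) (hpxH : ∀ e ∈ px.edges, e ∈ H.edgeSet)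
    {py : G.Walk u y} (hpy : IsShortestPath w G py) (hpyH : ∀ e ∈ py.edges, e ∈ H.edgeSet) :
    py = px.concat (hle h) := by
  have hq : IsShortestPath w H q := hP.of_append_left hw
  have hqh : IsShortestPath w H (q.concat h) := by
    rw [← Walk.concat_append] at hP
    exact hP.of_append_left hw
  rw [hpx.eq_mapLe hle (huniq u x) hpxH hq, hpy.eq_mapLe hle (huniq u y) hpyH hqh,
    Walk.concat_eq_append, Walk.concat_eq_append, Walk.mapLe_append]
  rfl

theorem stmt10_general (G : SimpleGraph V) (w : Sym2 V → ℝ)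
    (hw : ∀ e ∈ G.edgeSet, 0 < w e)
    (πG : ∀ a b : V, G.Walk a b) (hπG : ∀ a b : V, IsShortestPath w G (πG a b))
    (D : Set (Sym2 V))
    (huniqD : ∀ (a b : V) (p q : (G.deleteEdges D).Walk a b),
      IsShortestPath w (G.deleteEdges D) p → IsShortestPath w (G.deleteEdges D) q → p = q)
    (u v : V)
    (P : (G.deleteEdges D).Walk u v) (hP : IsShortestPath w (G.deleteEdges D) P)
    (x y : V) (hadj : G.Adj x y)
    -- π(u,x) and π(u,y) contain no edge of D
    (hux : ∀ e ∈ (πG u x).edges, e ∉ D) (huy : ∀ e ∈ (πG u y).edges, e ∉ D)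
    -- (x,y) is not a tree edge of T_u
    (hnt1 : πG u y ≠ (πG u x).concat hadj)
    (hnt2 : πG u x ≠ (πG u y).concat hadj.symm) :
    s(x, y) ∉ P.edges := by
  have hle := G.deleteEdges_le D
  have hwD : ∀ e ∈ (G.deleteEdges D).edgeSet, 0 ≤ w e := fun e he =>
    (hw e (edgeSet_mono hle he)).le
  have hπD : ∀ z, (∀ e ∈ (πG u z).edges, e ∉ D) →
      ∀ e ∈ (πG u z).edges, e ∈ (G.deleteEdges D).edgeSet := fun z hz e he => by
    rw [edgeSet_deleteEdges]
    exact ⟨(πG u z).edges_subset_edgeSet he, hz e he⟩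
  intro hmem
  rcases P.exists_append_cons_of_mem_edges hmem with ⟨q, h, r, rfl⟩ | ⟨q, h, r, rfl⟩
  · exact hnt1 (concat_eq_of_isShortestPath_append_cons hle hwD huniqD hP
      (hπG u x) (hπD x hux) (hπG u y) (hπD y huy))
  · exact hnt2 (concat_eq_of_isShortestPath_append_cons hle hwD huniqD hP
      (hπG u y) (hπD y huy) (hπG u x) (hπD x hux))

/-- Case 2.4.  Let `e = (x,y)` be an edge of `G` not in `D` such that
both `π(u,x)` and `π(u,y)` contain no edge of `D`, and `e` is not a tree edge of `T_u`.
Then `π_{G−D}(u,v)` does not traverse `e`. -/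
theorem stmt10 [Fintype V] [DecidableEq V] (G : SimpleGraph V) (w : Sym2 V → ℝ)
    (hw : ∀ e ∈ G.edgeSet, 0 < w e)
    (πG : ∀ a b : V, G.Walk a b) (hπG : ∀ a b : V, IsShortestPath w G (πG a b))
    (huniqG : ∀ (a b : V) (p q : G.Walk a b),
      IsShortestPath w G p → IsShortestPath w G q → p = q)
    (D : Set (Sym2 V)) (hDsub : D ⊆ G.edgeSet)
    (huniqD : ∀ (a b : V) (p q : (G.deleteEdges D).Walk a b),
      IsShortestPath w (G.deleteEdges D) p → IsShortestPath w (G.deleteEdges D) q → p = q)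
    (u v : V)
    (P : (G.deleteEdges D).Walk u v) (hP : IsShortestPath w (G.deleteEdges D) P)
    (x y : V) (hadj : G.Adj x y) (heD : s(x, y) ∉ D)
    -- π(u,x) and π(u,y) contain no edge of D
    (hux : ∀ e ∈ (πG u x).edges, e ∉ D) (huy : ∀ e ∈ (πG u y).edges, e ∉ D)
    -- (x,y) is not a tree edge of T_u
    (hnt1 : πG u y ≠ (πG u x).concat hadj)
    (hnt2 : πG u x ≠ (πG u y).concat hadj.symm) :
    s(x, y) ∉ P.edges :=
  stmt10_general G w hw πG hπG D huniqD u v P hP x y hadj hux huy hnt1 hnt2
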